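/- Let Q be symmetric positive definite with lower triangular part Γ and all diagonal entries 1. Then the update matrix I − BΓ^{-1}Q of Gaussian back-substitution CD has the same eigenvalues as the symmetric matrix I − Γ^{-1}QΓ^{-T}, where B is the GBS correction matrix. -/

import Mathlib

open Matrix Polynomial Real

noncomputable def lowerTri {n : ℕ} (Q : Matrix (Fin n) (Fin n) ℝ) : Matrix (Fin n) (Fin n) ℝ :=
  fun i j => if j ≤ i then Q i j else 0

noncomputable def l2norm {n : ℕ} (M : Matrix (Fin n) (Fin n) ℝ) : ℝ :=
  ‖(Matrix.toEuclideanCLM (𝕜 := ℝ) M : EuclideanSpace ℝ (Fin n) →L[ℝ] EuclideanSpace ℝ (Fin n))‖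

noncomputable def specRad {n : ℕ} (M : Matrix (Fin n) (Fin n) ℝ) : ℝ :=
  sSup (Set.image (fun z : ℂ => ‖z‖) (spectrum ℂ (M.map (algebraMap ℝ ℂ))))

/-!
Since `Q` has unit diagonal, `Γ` has determinant one, first column `Q e₀` and first row `e₀ᵀ`.
Hence `e₀` is fixed by `P = Γ⁻¹Q`, by `B` and by `Γ⁻ᵀ`. Now `1 - BP` and `1 - Γ⁻ᵀP` have zero first
column and agree outside the first row (`B` and `Γ⁻ᵀ` do), so they are block triangular with equal
diagonal blocks and share their characteristic polynomial; finally `1 - Γ⁻ᵀP` and `1 - PΓ⁻ᵀ` have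
the same characteristic polynomial, as `1 - XY` and `1 - YX` always do.
-/

namespace Matrix

variable {R : Type*} [CommRing R]

theorem charpoly_one_sub_mul_comm {ι : Type*} [Fintype ι] [DecidableEq ι] (A B : Matrix ι ι R) :
    (1 - A * B).charpoly = (1 - B * A).charpoly := by
  have h : ∀ C D : Matrix ι ι R, 1 - C * D = -C * D - scalar ι (-1) := fun C D => by
    simp [sub_eq_add_neg, add_comm]
  rw [h A B, h B A, charpoly_sub_scalar, charpoly_sub_scalar, charpoly_mul_comm, mul_neg, neg_mul]

theorem charpoly_eq_of_col_zero_of_row_eq {m : ℕ} {A D : Matrix (Fin (m + 1)) (Fin (m + 1)) R}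
    (hA : ∀ i ≠ 0, A i 0 = 0) (h₀₀ : A 0 0 = D 0 0) (hrow : ∀ i ≠ 0, A i = D i) :
    A.charpoly = D.charpoly := by
  let b : Fin (m + 1) → Bool := fun i => decide (i ≠ 0)
  have htri : ∀ M : Matrix (Fin (m + 1)) (Fin (m + 1)) R, (∀ i ≠ 0, M i 0 = 0) →
      M.BlockTriangular b := by
    intro M hM i j hij
    simp only [b, Bool.lt_iff, decide_eq_false_iff_not, not_not, decide_eq_true_eq] at hij
    rw [hij.1]
    exact hM i hij.2
  have hD : ∀ i ≠ 0, D i 0 = 0 := fun i hi => by rw [← hrow i hi, hA i hi]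
  rw [(htri A hA).charpoly, (htri D hD).charpoly]
  refine Finset.prod_congr rfl fun k _ => congrArg charpoly ?_
  ext ⟨i, hi⟩ ⟨j, hj⟩
  rw [toSquareBlock_def, toSquareBlock_def, of_apply, of_apply]
  by_cases hi0 : i = 0
  · have hj0 : j = 0 := by simpa [b, ← hi, hi0] using hj
    simp only [hi0, hj0, h₀₀]
  · rw [hrow i hi0]

theorem one_sub_apply_eq_zero_of_mulVec_single {ι : Type*} [Fintype ι] [DecidableEq ι]
    {M : Matrix ι ι R} {j : ι} (h : M *ᵥ Pi.single j 1 = Pi.single j 1) (i : ι) :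
    (1 - M) i j = 0 := by
  have hij := congrFun h i
  rw [mulVec_single_one, col_apply] at hij
  rw [sub_apply, hij, one_apply, Pi.single_apply]
  simp [eq_comm]

theorem charpoly_one_sub_eq_of_mulVec_single_zero {m : ℕ}
    {M N : Matrix (Fin (m + 1)) (Fin (m + 1)) R} (hM : M *ᵥ Pi.single 0 1 = Pi.single 0 1)
    (hN : N *ᵥ Pi.single 0 1 = Pi.single 0 1) (hrow : ∀ i ≠ 0, M i = N i) :
    (1 - M).charpoly = (1 - N).charpoly := by
  refine charpoly_eq_of_col_zero_of_row_eq (fun i _ => one_sub_apply_eq_zero_of_mulVec_single hM i)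
    ?_ fun i hi => congrArg ((1 : Matrix _ _ R) i - ·) (hrow i hi)
  rw [one_sub_apply_eq_zero_of_mulVec_single hM, one_sub_apply_eq_zero_of_mulVec_single hN]

end Matrix

theorem det_lowerTri {n : ℕ} (Q : Matrix (Fin n) (Fin n) ℝ) : (lowerTri Q).det = ∏ i, Q i i := by
  have htri : (lowerTri Q).IsLowerTriangular := fun i j hij => if_neg (not_le.mpr hij)
  simp [det_of_isLowerTriangular _ htri, lowerTri]

theorem lowerTri_mulVec_single_zero {n : ℕ} (Q : Matrix (Fin (n + 1)) (Fin (n + 1)) ℝ) :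
    lowerTri Q *ᵥ Pi.single 0 1 = Q *ᵥ Pi.single 0 1 := by
  ext i
  simp [lowerTri]

theorem single_zero_vecMul_lowerTri {n : ℕ} (Q : Matrix (Fin (n + 1)) (Fin (n + 1)) ℝ) :
    Pi.single 0 1 ᵥ* lowerTri Q = Pi.single 0 (Q 0 0) := by
  ext j
  rcases eq_or_ne j 0 with rfl | hj
  · simp [lowerTri]
  · simp [lowerTri, hj]

theorem inv_lowerTri_mul_mulVec_single_zero {n : ℕ} (Q : Matrix (Fin (n + 1)) (Fin (n + 1)) ℝ)
    (hdet : IsUnit (lowerTri Q).det) :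
    ((lowerTri Q)⁻¹ * Q) *ᵥ Pi.single 0 1 = Pi.single 0 1 := by
  rw [← mulVec_mulVec, ← lowerTri_mulVec_single_zero, mulVec_mulVec, nonsing_inv_mul _ hdet,
    one_mulVec]

theorem inv_lowerTri_transpose_mulVec_single_zero {n : ℕ}
    (Q : Matrix (Fin (n + 1)) (Fin (n + 1)) ℝ) (hdet : IsUnit (lowerTri Q).det) (h₀₀ : Q 0 0 = 1) :
    ((lowerTri Q)⁻¹)ᵀ *ᵥ Pi.single 0 1 = Pi.single 0 1 := by
  have hrow : Pi.single 0 1 ᵥ* lowerTri Q = Pi.single 0 1 := by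
    rw [single_zero_vecMul_lowerTri, h₀₀]
  rw [mulVec_transpose, ← hrow, vecMul_vecMul, mul_nonsing_inv _ hdet, vecMul_one, hrow]

theorem stmt7_general {n : ℕ} (Q Γ B : Matrix (Fin (n + 1)) (Fin (n + 1)) ℝ)
    (hdiag : ∀ i, Q i i = 1)
    (hΓ : Γ = lowerTri Q)
    (hB : ∀ i j, B i j = if i = 0 then (if j = 0 then (1 : ℝ) else 0)
        else if j = 0 then 0 else (Γ⁻¹)ᵀ i j) :
    (1 - B * Γ⁻¹ * Q).charpoly = (1 - Γ⁻¹ * Q * (Γᵀ)⁻¹).charpoly := by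
  subst hΓ
  have hdet : IsUnit (lowerTri Q).det := by simp [det_lowerTri, hdiag]
  have hPe := inv_lowerTri_mul_mulVec_single_zero Q hdet
  have hΓe := inv_lowerTri_transpose_mulVec_single_zero Q hdet (hdiag 0)
  have hBe : B *ᵥ Pi.single 0 1 = Pi.single 0 1 := by
    ext i
    rw [mulVec_single_one, col_apply, hB]
    rcases eq_or_ne i 0 with rfl | hi <;> simp [*]
  have hBrow : ∀ i ≠ 0, B i = ((lowerTri Q)⁻¹)ᵀ i := by
    intro i hi
    ext j
    rw [hB, if_neg hi]
    split_ifs with hj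
    · have hi0 := congrFun hΓe i
      rw [mulVec_single_one, col_apply] at hi0
      rw [hj, hi0, Pi.single_eq_of_ne hi]
    · rfl
  calc (1 - B * (lowerTri Q)⁻¹ * Q).charpoly = (1 - B * ((lowerTri Q)⁻¹ * Q)).charpoly := by
        rw [mul_assoc]
    _ = (1 - ((lowerTri Q)⁻¹)ᵀ * ((lowerTri Q)⁻¹ * Q)).charpoly :=
      charpoly_one_sub_eq_of_mulVec_single_zero (by rw [← mulVec_mulVec, hPe, hBe])
        (by rw [← mulVec_mulVec, hPe, hΓe]) fun i hi => by rw [mul_apply_eq_vecMul, hBrow i hi]; rfl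
    _ = (1 - (lowerTri Q)⁻¹ * Q * (lowerTri Q)ᵀ⁻¹).charpoly := by
      rw [charpoly_one_sub_mul_comm, transpose_nonsing_inv]

/-- The GBS-CD update matrix I - BΓ⁻¹Q has the same eigenvalues as the symmetric matrix
I - Γ⁻¹QΓ⁻ᵀ. -/
theorem stmt7 {n : ℕ} (Q Γ B : Matrix (Fin (n + 1)) (Fin (n + 1)) ℝ)
    (hQsym : Q.IsSymm) (hQpd : Q.PosDef) (hdiag : ∀ i, Q i i = 1)
    (hΓ : Γ = lowerTri Q)
    (hB : ∀ i j, B i j = if i = 0 then (if j = 0 then (1 : ℝ) else 0)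
        else if j = 0 then 0 else (Γ⁻¹)ᵀ i j) :
    (1 - B * Γ⁻¹ * Q).charpoly = (1 - Γ⁻¹ * Q * (Γᵀ)⁻¹).charpoly :=
  stmt7_general Q Γ B hdiag hΓ hB
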